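/- arXiv:1809.08763 — 4 statements merged into one kernel-verified Lean document; each statement's English description precedes it below -/
import Mathlib

section
/- For 0 ≤ i ≤ D-1, the dual eigenvalue θ̃*_i of the Grassmann graph with respect to a Delsarte clique, defined by θ̃*_i = (n_i θ*_i + (|C| - n_i) θ*_{i+1})/|C| with n_i = [i+1], |C| = [N-D+1], and θ*_j = (q^N - q)(2 - q^D - q^{N-D})/((q-1)(q^D-1)(q^{N-D}-1)) + (q^N-q)(q^N-1) q^{-j}/((q-1)(q^D-1)(q^{N-D}-1)), equals (q^{N-1}-1)(q + q^2 - q^{D+1} - q^{N-D+2})/((q-1)(q^D-1)(q^{N-D+1}-1)) + (q^N-q)(q^N-1) q^{-i}/((q-1)(q^D-1)(q^{N-D+1}-1)). -/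
/-- The dual eigenvalues of the Grassmann graph with respect to a Delsarte clique. -/
theorem grassmann_clique_dual_eigenvalues (q : ℝ) (hq : 1 < q) (N D : ℕ)
    (hD : 3 ≤ D) (hND : 2 * D ≤ N)
    (gauss : ℕ → ℝ) (hgauss : ∀ n, gauss n = (q ^ n - 1) / (q - 1))
    (θs : ℕ → ℝ)
    (hθs : ∀ j, θs j =
      (q ^ N - q) * (2 - q ^ D - q ^ (N - D)) / ((q - 1) * (q ^ D - 1) * (q ^ (N - D) - 1))
      + (q ^ N - q) * (q ^ N - 1) * q ^ (-(j : ℤ))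
          / ((q - 1) * (q ^ D - 1) * (q ^ (N - D) - 1)))
    (i : ℕ) (hi : i ≤ D - 1) :
    (gauss (i + 1) * θs i + (gauss (N - D + 1) - gauss (i + 1)) * θs (i + 1))
        / gauss (N - D + 1)
      = (q ^ (N - 1) - 1) * (q + q ^ 2 - q ^ (D + 1) - q ^ (N - D + 2))
          / ((q - 1) * (q ^ D - 1) * (q ^ (N - D + 1) - 1))
        + (q ^ N - q) * (q ^ N - 1) * q ^ (-(i : ℤ))
          / ((q - 1) * (q ^ D - 1) * (q ^ (N - D + 1) - 1)) := by

  obtain ⟨m, rfl⟩ : ∃ m, N = D + m + 1 := ⟨N - D - 1, by omega⟩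
  have e1 : D + m + 1 - D = m + 1 := by omega
  have e2 : D + m + 1 - 1 = D + m := by omega
  have hq0 : (0:ℝ) < q := lt_trans one_pos hq
  have hz : ∀ j : ℕ, q ^ (-(j:ℤ)) = (q ^ j)⁻¹ := fun j => by
    rw [zpow_neg, zpow_natCast]
  have hpow : ∀ n : ℕ, n ≠ 0 → q ^ n - 1 ≠ 0 := fun n hn =>
    ne_of_gt (sub_pos.mpr (one_lt_pow₀ hq hn))
  have hq1 : q - 1 ≠ 0 := ne_of_gt (sub_pos.mpr hq)
  have hqne : q ≠ 0 := ne_of_gt hq0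
  have hiq : q ^ i ≠ 0 := pow_ne_zero _ hqne
  have hD0 : q ^ D - 1 ≠ 0 := hpow D (by omega)
  have hm1 : q ^ (m + 1) - 1 ≠ 0 := hpow (m + 1) (by omega)
  have hm2 : q ^ (m + 2) - 1 ≠ 0 := hpow (m + 2) (by omega)
  simp only [hgauss, hθs, e1, e2, hz]
  rw [show (i : ℕ) + 1 = i + 1 from rfl]
  field_simp
  ring
end

section
/- For a Leonard system of dual q-Hahn type with parameter sequence (a, a*, b, b*, c, r; q, d), the intersection numbers computed from the standard formulas b_i = φ_{i+1}·∏_{j<i}(θ*_i-θ*_j)/∏_{j≤i}(θ*_{i+1}-θ*_j) and the analogous formula for c_i simplify to b_i = b(1 - q^{i-d})(1 - r q^{i+1}) and c_i = (1 - q^i)(c - b r q^{i-d}). -/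
/-! Since `θ*_j = a* + b* q^{-j}`, shifting both indices of `θ*_m - θ*_n` by one divides it by `q`.
Applied factor by factor, this shows that the two products in the formula for `b_i` agree up to a
power of `q` and the single factor `θ*_{i+1} - θ*_0`, and those in the formula for `c_i` up to a
power of `q` and the factor `θ*_i - θ*_{d+1}`. Each intersection number thus reduces to one
quotient of explicit `q`-expressions, which simplifies to the closed form. -/

open Finset

namespace LeonardSystem

section Shift

variable {R : Type*} [CommRing R] {θs : ℕ → R} {q : R}
  (hshift : ∀ m n, θs m - θs n = q * (θs (m + 1) - θs (n + 1)))
include hshift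

theorem pow_mul_prod_range_succ_sub (i : ℕ) :
    q ^ i * ∏ j ∈ range (i + 1), (θs (i + 1) - θs j)
      = (θs (i + 1) - θs 0) * ∏ j ∈ range i, (θs i - θs j) := by
  rw [prod_range_succ', prod_congr rfl fun j _ => hshift i j, prod_mul_distrib, prod_const,
    card_range]
  ring

theorem prod_Icc_sub_eq_pow_mul {k d : ℕ} (hkd : k < d) :
    ∏ j ∈ Icc (k + 1) d, (θs k - θs j)
      = q ^ (d - k) * (θs (k + 1) - θs (d + 1)) * ∏ j ∈ Icc (k + 1 + 1) d, (θs (k + 1) - θs j) := by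
  have hreindex : ∏ j ∈ Icc (k + 1) d, (θs (k + 1) - θs (j + 1))
      = ∏ j ∈ Icc (k + 1 + 1) (d + 1), (θs (k + 1) - θs j) := by
    rw [← map_add_right_Icc (k + 1) d 1, prod_map]
    rfl
  rw [prod_congr rfl fun j _ => hshift k j, prod_mul_distrib, prod_const, Nat.card_Icc,
    hreindex, prod_Icc_succ_top (by omega), Nat.add_sub_add_right]
  ring

end Shift

variable {K : Type*} [Field K]

/-- The intersection numbers `b_i`, `c_i` of a Leonard system of diameter `d`, computed from its
dual eigenvalues `θs` and its first and second split sequences `φ`, `ϕ`. -/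
def bIntersection (θs φ : ℕ → K) (i : ℕ) : K :=
  φ (i + 1) * (∏ j ∈ range i, (θs i - θs j)) / ∏ j ∈ range (i + 1), (θs (i + 1) - θs j)

def cIntersection (d : ℕ) (θs ϕ : ℕ → K) (i : ℕ) : K :=
  ϕ i * (∏ j ∈ Icc (i + 1) d, (θs i - θs j)) / ∏ j ∈ Icc i d, (θs (i - 1) - θs j)

variable {θs : ℕ → K} {q : K} (hshift : ∀ m n, θs m - θs n = q * (θs (m + 1) - θs (n + 1)))
include hshift

theorem bIntersection_eq_of_shift (hq : q ≠ 0) (φ : ℕ → K) {i : ℕ}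
    (hprod : ∏ j ∈ range i, (θs i - θs j) ≠ 0) :
    bIntersection θs φ i = φ (i + 1) * q ^ i / (θs (i + 1) - θs 0) := by
  have hden : ∏ j ∈ range (i + 1), (θs (i + 1) - θs j)
      = (θs (i + 1) - θs 0) * (∏ j ∈ range i, (θs i - θs j)) / q ^ i :=
    eq_div_of_mul_eq (pow_ne_zero i hq)
      ((mul_comm _ _).trans (pow_mul_prod_range_succ_sub hshift i))
  rw [bIntersection, hden, div_div_eq_mul_div, mul_right_comm, mul_div_mul_right _ _ hprod]

theorem cIntersection_eq_of_shift (ϕ : ℕ → K) {k d : ℕ} (hkd : k < d)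
    (hprod : ∏ j ∈ Icc (k + 1 + 1) d, (θs (k + 1) - θs j) ≠ 0) :
    cIntersection d θs ϕ (k + 1) = ϕ (k + 1) / (q ^ (d - k) * (θs (k + 1) - θs (d + 1))) := by
  rw [cIntersection, Nat.add_sub_cancel, prod_Icc_sub_eq_pow_mul hshift hkd,
    mul_div_mul_right _ _ hprod]

end LeonardSystem

namespace DualQHahn

open LeonardSystem

variable {K : Type*} [Field K] {θs : ℕ → K} {α β q : K}
  (hθs : ∀ j, θs j = α + β * q ^ (-(j : ℤ)))
include hθs

theorem dualEigenvalue_sub_eq_mul_sub_succ (hq : q ≠ 0) (m n : ℕ) :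
    θs m - θs n = q * (θs (m + 1) - θs (n + 1)) := by
  simp only [hθs, zpow_neg, zpow_natCast, pow_succ]
  field_simp
  ring

theorem dualEigenvalue_sub_of_le (hq : q ≠ 0) {m n : ℕ} (hmn : m ≤ n) :
    θs m - θs n = β * (q ^ (n - m) - 1) / q ^ n := by
  obtain ⟨e, rfl⟩ := Nat.exists_eq_add_of_le hmn
  simp only [hθs, zpow_neg, zpow_natCast, Nat.add_sub_cancel_left, pow_add]
  field_simp
  ring

theorem dualEigenvalue_ne (hq : q ≠ 0) (hβ : β ≠ 0) {d : ℕ}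
    (hqd : ∀ m : ℕ, 1 ≤ m → m ≤ d → q ^ m ≠ 1) {m n : ℕ} (hmn : m < n) (hnd : n ≤ m + d) :
    θs m ≠ θs n := by
  rw [← sub_ne_zero, dualEigenvalue_sub_of_le hθs hq hmn.le]
  exact div_ne_zero (mul_ne_zero hβ (sub_ne_zero.2 (hqd _ (by omega) (by omega))))
    (pow_ne_zero _ hq)

theorem bIntersection_eq (hq : q ≠ 0) (hβ : β ≠ 0) {d : ℕ}
    (hqd : ∀ m : ℕ, 1 ≤ m → m ≤ d → q ^ m ≠ 1) {b r : K} {φ : ℕ → K}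
    (hφ : ∀ j, φ j = b * β * q ^ (1 - 2 * (j : ℤ)) * (1 - q ^ j)
        * (1 - q ^ ((j : ℤ) - d - 1)) * (1 - r * q ^ j))
    {i : ℕ} (hid : i < d) :
    bIntersection θs φ i = b * (1 - q ^ ((i : ℤ) - d)) * (1 - r * q ^ (i + 1)) := by
  have hprod : ∏ j ∈ range i, (θs i - θs j) ≠ 0 := prod_ne_zero_iff.2 fun j hj =>
    sub_ne_zero.2 (dualEigenvalue_ne hθs hq hβ hqd (mem_range.1 hj) (by omega)).symm
  have hqi : q ^ (i + 1) - 1 ≠ 0 := sub_ne_zero.2 (hqd _ (by omega) (by omega))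
  rw [bIntersection_eq_of_shift (dualEigenvalue_sub_eq_mul_sub_succ hθs hq) hq φ hprod,
    ← neg_sub, dualEigenvalue_sub_of_le hθs hq (Nat.zero_le _), Nat.sub_zero, hφ,
    show 1 - 2 * ((i + 1 : ℕ) : ℤ) = ((0 : ℕ) : ℤ) - ((2 * i + 1 : ℕ) : ℤ) by push_cast; ring,
    show ((i + 1 : ℕ) : ℤ) - d - 1 = (i : ℤ) - d by push_cast; ring,
    zpow_natCast_sub_natCast₀ hq]
  field_simp
  ring

theorem cIntersection_eq (hq : q ≠ 0) (hβ : β ≠ 0) {d : ℕ}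
    (hqd : ∀ m : ℕ, 1 ≤ m → m ≤ d → q ^ m ≠ 1) {b c r : K} (hc : c ≠ 0) {ϕ : ℕ → K}
    (hϕ : ∀ j, ϕ j = c * β * q ^ ((d : ℤ) + 1 - 2 * j) * (1 - q ^ j)
        * (1 - q ^ ((j : ℤ) - d - 1)) * (1 - b * r * c⁻¹ * q ^ ((j : ℤ) - d)))
    {i : ℕ} (hi : 1 ≤ i) (hid : i ≤ d) :
    cIntersection d θs ϕ i = (1 - q ^ i) * (c - b * r * q ^ ((i : ℤ) - d)) := by
  obtain ⟨k, rfl⟩ : ∃ k, i = k + 1 := ⟨i - 1, by omega⟩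
  have hprod : ∏ j ∈ Icc (k + 1 + 1) d, (θs (k + 1) - θs j) ≠ 0 := prod_ne_zero_iff.2 fun j hj =>
    have ⟨hj₁, hj₂⟩ := mem_Icc.1 hj
    sub_ne_zero.2 (dualEigenvalue_ne hθs hq hβ hqd (by omega) (by omega))
  rw [cIntersection_eq_of_shift (dualEigenvalue_sub_eq_mul_sub_succ hθs hq) ϕ (by omega) hprod,
    dualEigenvalue_sub_of_le hθs hq (by omega), hϕ]
  obtain ⟨e, rfl⟩ : ∃ e, d = k + 1 + e := ⟨d - (k + 1), by omega⟩
  have hqe : q ^ (e + 1) - 1 ≠ 0 := sub_ne_zero.2 (hqd _ (by omega) (by omega))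
  rw [show k + 1 + e - k = e + 1 by omega, show k + 1 + e + 1 - (k + 1) = e + 1 by omega,
    show ((k + 1 + e : ℕ) : ℤ) + 1 - 2 * ((k + 1 : ℕ) : ℤ) = ((e : ℕ) : ℤ) - ((k : ℕ) : ℤ) by
      push_cast; ring,
    show ((k + 1 : ℕ) : ℤ) - ((k + 1 + e : ℕ) : ℤ) - 1 = ((0 : ℕ) : ℤ) - ((e + 1 : ℕ) : ℤ) by
      push_cast; ring,
    show ((k + 1 : ℕ) : ℤ) - ((k + 1 + e : ℕ) : ℤ) = ((0 : ℕ) : ℤ) - ((e : ℕ) : ℤ) by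
      push_cast; ring,
    zpow_natCast_sub_natCast₀ hq, zpow_natCast_sub_natCast₀ hq, zpow_natCast_sub_natCast₀ hq]
  field_simp
  ring

end DualQHahn

theorem dual_qHahn_intersection_numbers_general (q : ℂ) (hq : q ≠ 0) (d : ℕ)
    (hqd : ∀ m : ℕ, 1 ≤ m → m ≤ d → q ^ m ≠ 1)
    (as b bs c r : ℂ) (hbs : bs ≠ 0) (hc : c ≠ 0)
    (θs φ ϕ : ℕ → ℂ)
    (hθs : ∀ j, θs j = as + bs * q ^ (-(j : ℤ)))
    (hφ : ∀ j, φ j = b * bs * q ^ (1 - 2 * (j : ℤ)) * (1 - q ^ j)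
        * (1 - q ^ ((j : ℤ) - d - 1)) * (1 - r * q ^ j))
    (hϕ : ∀ j, ϕ j = c * bs * q ^ ((d : ℤ) + 1 - 2 * j) * (1 - q ^ j)
        * (1 - q ^ ((j : ℤ) - d - 1)) * (1 - b * r * c⁻¹ * q ^ ((j : ℤ) - d))) :
    (∀ i : ℕ, i < d →
      φ (i + 1) * (∏ j ∈ Finset.range i, (θs i - θs j))
          / (∏ j ∈ Finset.range (i + 1), (θs (i + 1) - θs j))
        = b * (1 - q ^ ((i : ℤ) - d)) * (1 - r * q ^ (i + 1))) ∧
    (∀ i : ℕ, 1 ≤ i → i ≤ d →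
      ϕ i * (∏ j ∈ Finset.Icc (i + 1) d, (θs i - θs j))
          / (∏ j ∈ Finset.Icc i d, (θs (i - 1) - θs j))
        = (1 - q ^ i) * (c - b * r * q ^ ((i : ℤ) - d))) :=
  ⟨fun _ hid => DualQHahn.bIntersection_eq hθs hq hbs hqd hφ hid,
    fun _ hi hid => DualQHahn.cIntersection_eq hθs hq hbs hqd hc hϕ hi hid⟩

/-- Intersection numbers of a dual `q`-Hahn Leonard system:
`b_i = b(1-q^{i-d})(1-rq^{i+1})` and `c_i = (1-q^i)(c - brq^{i-d})`. -/
theorem dual_qHahn_intersection_numbers (q : ℂ) (hq : q ≠ 0) (d : ℕ)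
    (hqd : ∀ m : ℕ, 1 ≤ m → m ≤ d → q ^ m ≠ 1)
    (a as b bs c r : ℂ) (hb : b ≠ 0) (hbs : bs ≠ 0) (hc : c ≠ 0) (hr : r ≠ 0)
    (hr1 : ∀ m : ℕ, 1 ≤ m → m ≤ d → r * q ^ m ≠ 1)
    (hr2 : ∀ m : ℕ, 1 ≤ m → m ≤ d → c * b⁻¹ * r⁻¹ * q ^ ((m : ℤ) - 1) ≠ 1)
    (θs φ ϕ : ℕ → ℂ)
    (hθs : ∀ j, θs j = as + bs * q ^ (-(j : ℤ)))
    (hφ : ∀ j, φ j = b * bs * q ^ (1 - 2 * (j : ℤ)) * (1 - q ^ j)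
        * (1 - q ^ ((j : ℤ) - d - 1)) * (1 - r * q ^ j))
    (hϕ : ∀ j, ϕ j = c * bs * q ^ ((d : ℤ) + 1 - 2 * j) * (1 - q ^ j)
        * (1 - q ^ ((j : ℤ) - d - 1)) * (1 - b * r * c⁻¹ * q ^ ((j : ℤ) - d))) :
    (∀ i : ℕ, i < d →
      φ (i + 1) * (∏ j ∈ Finset.range i, (θs i - θs j))
          / (∏ j ∈ Finset.range (i + 1), (θs (i + 1) - θs j))
        = b * (1 - q ^ ((i : ℤ) - d)) * (1 - r * q ^ (i + 1))) ∧
    (∀ i : ℕ, 1 ≤ i → i ≤ d →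
      ϕ i * (∏ j ∈ Finset.Icc (i + 1) d, (θs i - θs j))
          / (∏ j ∈ Finset.Icc i d, (θs (i - 1) - θs j))
        = (1 - q ^ i) * (c - b * r * q ^ ((i : ℤ) - d))) :=
  dual_qHahn_intersection_numbers_general q hq d hqd as b bs c r hbs hc θs φ ϕ hθs hφ hϕ
end

section
/- For 1 ≤ i ≤ D-1, the 2×2 matrix X(i) = τ/(q^D-1) · [[q^{N+1} - q^i + q^D - q^{N+1-i}, (q^i-1)(q^{D-i}-1)(q^{N-i+1}-1)(q^{i-1} - q^{N-D})/(q-1)], [q^{D+1}(1-q), q^{N+D+1-i} + q^{D+i} - q^{N+1} - q^D]] has eigenvalues τ q^i and τ^{-1} q^{-i}, where τ = -q^{(-N-1)/2}. Equivalently, trace(X(i)) = τ q^i + τ^{-1} q^{-i} and det(X(i)) = 1. -/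
/-!
Write `X = τ / (q ^ D - 1) • M`. Once the differences of the exponents are named, the trace
`(q ^ D - 1) * (q ^ i + q ^ (N + 1 - i))` and the determinant `q ^ (N + 1) * (q ^ D - 1) ^ 2`
of `M` are polynomial identities. Both claims then follow from `τ ^ 2 * q ^ (N + 1) = 1`,
which also gives `τ⁻¹ * q ^ (-i) = τ * q ^ (N + 1 - i)`.
-/

open Matrix

def unscaledX {K : Type*} [Field K] (q : K) (N D i : ℕ) : Matrix (Fin 2) (Fin 2) K :=
  !![q ^ (N + 1) - q ^ i + q ^ D - q ^ (N + 1 - i),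
     (q ^ i - 1) * (q ^ (D - i) - 1) * (q ^ (N - i + 1) - 1)
       * (q ^ (i - 1) - q ^ (N - D)) / (q - 1);
     q ^ (D + 1) * (1 - q),
     q ^ (N + D + 1 - i) + q ^ (D + i) - q ^ (N + 1) - q ^ D]

section

variable {K : Type*} [Field K] (q : K) {N D i : ℕ}

theorem trace_unscaledX (hiN : i ≤ N + 1) :
    (unscaledX q N D i).trace = (q ^ D - 1) * (q ^ i + q ^ (N + 1 - i)) := by
  rw [unscaledX, trace_fin_two_of, show N + D + 1 - i = D + (N + 1 - i) by omega, pow_add,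
    pow_add]
  ring

theorem det_unscaledX (hq : q ≠ 1) (hi : 1 ≤ i) (hiD : i ≤ D) (hDN : D ≤ N) :
    (unscaledX q N D i).det = q ^ (N + 1) * (q ^ D - 1) ^ 2 := by
  obtain ⟨j, rfl⟩ := Nat.exists_eq_add_of_le hi
  obtain ⟨k, rfl⟩ := Nat.exists_eq_add_of_le hiD
  obtain ⟨m, rfl⟩ := Nat.exists_eq_add_of_le hDN
  have hq1 : q - 1 ≠ 0 := sub_ne_zero.2 hq
  rw [unscaledX, det_fin_two_of,
    show 1 + j + k + m + 1 - (1 + j) = k + m + 1 by omega,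
    show 1 + j + k - (1 + j) = k by omega,
    show 1 + j + k + m - (1 + j) + 1 = k + m + 1 by omega,
    show 1 + j - 1 = j by omega,
    show 1 + j + k + m - (1 + j + k) = m by omega,
    show 1 + j + k + m + (1 + j + k) + 1 - (1 + j) = 2 * k + m + j + 2 by omega]
  field_simp
  ring

end

theorem sq_rpow_neg_half_mul_pow {x : ℝ} (hx : 0 < x) (n : ℕ) :
    (x ^ (-(n : ℝ) / 2)) ^ 2 * x ^ n = 1 := by
  rw [← Real.rpow_mul_natCast hx.le, ← Real.rpow_natCast x n, ← Real.rpow_add hx]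
  norm_num

theorem X_matrix_trace_det_general (q : ℝ) (hq : 1 < q) (N D : ℕ)
    (hND : 2 * D ≤ N)
    (i : ℕ) (hi1 : 1 ≤ i) (hi2 : i ≤ D - 1)
    (τ : ℝ) (hτ : τ = -q ^ ((-(N : ℝ) - 1) / 2))
    (X : Matrix (Fin 2) (Fin 2) ℝ)
    (hX : X = (τ / (q ^ D - 1)) •
      !![q ^ (N + 1) - q ^ i + q ^ D - q ^ (N + 1 - i),
         (q ^ i - 1) * (q ^ (D - i) - 1) * (q ^ (N - i + 1) - 1)
           * (q ^ (i - 1) - q ^ (N - D)) / (q - 1);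
         q ^ (D + 1) * (1 - q),
         q ^ (N + D + 1 - i) + q ^ (D + i) - q ^ (N + 1) - q ^ D]) :
    Matrix.trace X = τ * q ^ i + τ⁻¹ * q ^ (-(i : ℤ)) ∧ Matrix.det X = 1 := by
  have hq0 : 0 < q := by linarith
  have hqD : q ^ D - 1 ≠ 0 := (sub_pos.2 (one_lt_pow₀ hq (by omega))).ne'
  have hτsq : τ ^ 2 * q ^ (N + 1) = 1 := by
    rw [hτ, neg_sq, show (-(N : ℝ) - 1) / 2 = -((N + 1 : ℕ) : ℝ) / 2 by push_cast; ring]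
    exact sq_rpow_neg_half_mul_pow hq0 (N + 1)
  have hτinv : τ⁻¹ = τ * q ^ (N + 1) :=
    inv_eq_of_mul_eq_one_right (by rw [← mul_assoc, ← sq, hτsq])
  change X = _ • unscaledX q N D i at hX
  subst hX
  constructor
  · rw [trace_smul, trace_unscaledX q (by omega), smul_eq_mul, hτinv, _root_.zpow_neg,
      zpow_natCast, pow_sub₀ q hq0.ne' (by omega)]
    field_simp
  · rw [det_smul, det_unscaledX q hq.ne' hi1 (by omega) (by omega), Fintype.card_fin, div_pow]
    field_simp
    linear_combination hτsq

/-- The matrix `X(i)` has eigenvalues `τq^i` and `τ⁻¹q^{-i}`; equivalently its trace is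
`τq^i + τ⁻¹q^{-i}` and its determinant is `1`. -/
theorem X_matrix_trace_det (q : ℝ) (hq : 1 < q) (N D : ℕ)
    (hD : 3 ≤ D) (hND : 2 * D ≤ N)
    (i : ℕ) (hi1 : 1 ≤ i) (hi2 : i ≤ D - 1)
    (τ : ℝ) (hτ : τ = -q ^ ((-(N : ℝ) - 1) / 2))
    (X : Matrix (Fin 2) (Fin 2) ℝ)
    (hX : X = (τ / (q ^ D - 1)) •
      !![q ^ (N + 1) - q ^ i + q ^ D - q ^ (N + 1 - i),
         (q ^ i - 1) * (q ^ (D - i) - 1) * (q ^ (N - i + 1) - 1)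
           * (q ^ (i - 1) - q ^ (N - D)) / (q - 1);
         q ^ (D + 1) * (1 - q),
         q ^ (N + D + 1 - i) + q ^ (D + i) - q ^ (N + 1) - q ^ D]) :
    Matrix.trace X = τ * q ^ i + τ⁻¹ * q ^ (-(i : ℤ)) ∧ Matrix.det X = 1 :=
  X_matrix_trace_det_general q hq N D hND i hi1 hi2 τ hτ X hX
end

section
/- Define vectors in ℂ² by y_i = ((q^{D-i}-1)(q^{N-i+1}-1)/((q^D-1)(q^{N-2i+1}-1)), q^{D+1-i}(q-1)/((q^D-1)(q^{N-2i+1}-1))) and y_{-i} = (q^{D-i}(q^i-1)(q^{N-D-i+1}-1)/((q^D-1)(q^{N-2i+1}-1)), -q^{D-i+1}(q-1)/((q^D-1)(q^{N-2i+1}-1))) for 1 ≤ i ≤ D-1. Then X(i)·y_i = τ q^i · y_i and X(i)·y_{-i} = τ^{-1} q^{-i} · y_{-i}, where X(i) is the 2×2 matrix τ/(q^D-1)·[[q^{N+1}-q^i+q^D-q^{N+1-i}, (q^i-1)(q^{D-i}-1)(q^{N-i+1}-1)(q^{i-1}-q^{N-D})/(q-1)], [q^{D+1}(1-q), q^{N+D+1-i}+q^{D+i}-q^{N+1}-q^D]]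 and τ = -q^{(-N-1)/2}. Moreover y_i + y_{-i} = (1, 0). -/
/-!
With `a = q^i`, `b = q^D`, `c = q^(N+1)` every truncated exponent in the statement resolves to
a quotient of these, and `X(i) = τ/(b-1) • M(a,b,c)` for the matrix `Grassmann.xMat` below.
Over any field, `M` has the polynomial eigenvectors `((b-a)(c-a), abq(q-1))` and
`((a-1)(c-ab), -abq(q-1))` with eigenvalues `(b-1)a` and `(b-1)c/a`; they add up to
`(b-1)(c-a²) • (1,0)`, and `y_{±i}` are these eigenvectors divided by `(b-1)(c-a²)`.
Finally `τ² = c⁻¹`, so the eigenvalue `τc/a` of `X(i)` is `τ⁻¹a⁻¹`.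
-/

open Matrix

theorem pow_eq_div_of_add_eq {G : Type*} [GroupWithZero G] {q : G} (hq : q ≠ 0) {k n m : ℕ}
    (h : k + n = m) : q ^ k = q ^ m / q ^ n := by
  rw [← h, pow_add, mul_div_cancel_right₀ _ (pow_ne_zero n hq)]

theorem pow_sub_two_mul_add_one {G : Type*} [GroupWithZero G] {q : G} (hq : q ≠ 0) {N i : ℕ}
    (h : 2 * i ≤ N) : q ^ (N - 2 * i + 1) = q ^ (N + 1) / (q ^ i) ^ 2 := by
  rw [pow_eq_div_of_add_eq hq (show N - 2 * i + 1 + i * 2 = N + 1 by omega), pow_mul]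

namespace Grassmann

variable {K : Type*} [Field K] (q a b c : K)

def xMat : Matrix (Fin 2) (Fin 2) K :=
  !![c - a + b - c / a, (a - 1) * (b / a - 1) * (c / a - 1) * (a / q - c / (q * b)) / (q - 1);
     b * q * (1 - q), c * b / a + b * a - c - b]

def vPlus : Fin 2 → K := ![(b - a) * (c - a), a * b * q * (q - 1)]

def vMinus : Fin 2 → K := ![(a - 1) * (c - a * b), -(a * b * q * (q - 1))]

variable {q a b c}

theorem xMat_mulVec_vPlus (hq : q ≠ 0) (hq1 : q - 1 ≠ 0) (ha : a ≠ 0) (hb : b ≠ 0) :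
    xMat q a b c *ᵥ vPlus q a b c = (a * (b - 1)) • vPlus q a b c := by
  ext k
  fin_cases k <;>
  · simp only [xMat, vPlus, mulVec, dotProduct, Fin.sum_univ_two, of_apply, cons_val',
      cons_val_fin_one, cons_val_zero, cons_val_one, Fin.zero_eta, Fin.mk_one, Fin.isValue,
      Pi.smul_apply, smul_eq_mul]
    field_simp
    ring

theorem xMat_mulVec_vMinus (hq : q ≠ 0) (hq1 : q - 1 ≠ 0) (ha : a ≠ 0) (hb : b ≠ 0) :
    xMat q a b c *ᵥ vMinus q a b c = (c / a * (b - 1)) • vMinus q a b c := by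
  ext k
  fin_cases k <;>
  · simp only [xMat, vMinus, mulVec, dotProduct, Fin.sum_univ_two, of_apply, cons_val',
      cons_val_fin_one, cons_val_zero, cons_val_one, Fin.zero_eta, Fin.mk_one, Fin.isValue,
      Pi.smul_apply, smul_eq_mul]
    field_simp
    ring

theorem vPlus_add_vMinus :
    vPlus q a b c + vMinus q a b c = ((b - 1) * (c - a ^ 2)) • ![1, 0] := by
  rw [vPlus, vMinus, vec2_add, smul_vec2]
  exact vec2_eq (by ring) (by ring)

theorem smul_vPlus (ha : a ≠ 0) :
    ((b - 1) * (c - a ^ 2))⁻¹ • vPlus q a b c =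
      ![(b / a - 1) * (c / a - 1) / ((b - 1) * (c / a ^ 2 - 1)),
        b * q / a * (q - 1) / ((b - 1) * (c / a ^ 2 - 1))] := by
  rw [vPlus, smul_vec2, smul_eq_mul, smul_eq_mul]
  exact vec2_eq (by field_simp) (by field_simp)

theorem smul_vMinus (ha : a ≠ 0) (hb : b ≠ 0) :
    ((b - 1) * (c - a ^ 2))⁻¹ • vMinus q a b c =
      ![b / a * (a - 1) * (c / (b * a) - 1) / ((b - 1) * (c / a ^ 2 - 1)),
        -(b * q / a * (q - 1) / ((b - 1) * (c / a ^ 2 - 1)))] := by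
  rw [vMinus, smul_vec2, smul_eq_mul, smul_eq_mul]
  exact vec2_eq (by field_simp) (by field_simp)

section Powers

variable {N D i : ℕ}

theorem xMat_pow (hq : q ≠ 0) (hi : 1 ≤ i) (hiD : i ≤ D) (hDN : D ≤ N) :
    !![q ^ (N + 1) - q ^ i + q ^ D - q ^ (N + 1 - i),
       (q ^ i - 1) * (q ^ (D - i) - 1) * (q ^ (N - i + 1) - 1)
         * (q ^ (i - 1) - q ^ (N - D)) / (q - 1);
       q ^ (D + 1) * (1 - q),
       q ^ (N + D + 1 - i) + q ^ (D + i) - q ^ (N + 1) - q ^ D] =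
      xMat q (q ^ i) (q ^ D) (q ^ (N + 1)) := by
  rw [pow_eq_div_of_add_eq hq (show N + 1 - i + i = N + 1 by omega),
    pow_eq_div_of_add_eq hq (show N - i + 1 + i = N + 1 by omega),
    pow_eq_div_of_add_eq hq (show D - i + i = D by omega),
    pow_eq_div_of_add_eq hq (show i - 1 + 1 = i by omega),
    pow_eq_div_of_add_eq hq (show N - D + (1 + D) = N + 1 by omega),
    pow_eq_div_of_add_eq hq (show N + D + 1 - i + i = N + 1 + D by omega),
    pow_succ q D, pow_add q D i, pow_add q 1 D, pow_add q (N + 1) D, pow_one]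
  rfl

theorem vPlus_pow (hq : q ≠ 0) (hiD : i ≤ D) (h2i : 2 * i ≤ N) :
    ![(q ^ (D - i) - 1) * (q ^ (N - i + 1) - 1)
        / ((q ^ D - 1) * (q ^ (N - 2 * i + 1) - 1)),
      q ^ (D + 1 - i) * (q - 1) / ((q ^ D - 1) * (q ^ (N - 2 * i + 1) - 1))] =
      ((q ^ D - 1) * (q ^ (N + 1) - (q ^ i) ^ 2))⁻¹ •
        vPlus q (q ^ i) (q ^ D) (q ^ (N + 1)) := by
  rw [smul_vPlus (pow_ne_zero i hq), pow_sub_two_mul_add_one hq h2i,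
    pow_eq_div_of_add_eq hq (show D + 1 - i + i = D + 1 by omega),
    pow_eq_div_of_add_eq hq (show D - i + i = D by omega),
    pow_eq_div_of_add_eq hq (show N - i + 1 + i = N + 1 by omega), pow_succ q D]

theorem vMinus_pow (hq : q ≠ 0) (hiD : i ≤ D) (hDN : D + i ≤ N) :
    ![q ^ (D - i) * (q ^ i - 1) * (q ^ (N - D - i + 1) - 1)
        / ((q ^ D - 1) * (q ^ (N - 2 * i + 1) - 1)),
      -(q ^ (D - i + 1) * (q - 1) / ((q ^ D - 1) * (q ^ (N - 2 * i + 1) - 1)))] =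
      ((q ^ D - 1) * (q ^ (N + 1) - (q ^ i) ^ 2))⁻¹ •
        vMinus q (q ^ i) (q ^ D) (q ^ (N + 1)) := by
  rw [smul_vMinus (pow_ne_zero i hq) (pow_ne_zero D hq), pow_sub_two_mul_add_one hq (by omega),
    pow_eq_div_of_add_eq hq (show D - i + i = D by omega),
    pow_eq_div_of_add_eq hq (show N - D - i + 1 + (D + i) = N + 1 by omega),
    pow_eq_div_of_add_eq hq (show D - i + 1 + i = D + 1 by omega), pow_succ q D, pow_add q D i]

end Powers

end Grassmann

theorem Matrix.smul_mulVec_smul_of_mulVec_eq {n K : Type*} [Fintype n] [CommSemiring K]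
    {M : Matrix n n K} {v : n → K} {μ : K} (h : M *ᵥ v = μ • v) (r s : K) :
    (r • M) *ᵥ (s • v) = (r * μ) • (s • v) := by
  rw [smul_mulVec, mulVec_smul, h, smul_comm s μ, smul_smul]

theorem Real.sq_rpow_neg_succ_div_two {q : ℝ} (hq : 0 < q) (N : ℕ) :
    (q ^ ((-(N : ℝ) - 1) / 2)) ^ 2 = (q ^ (N + 1))⁻¹ := by
  rw [← Real.rpow_mul_natCast hq.le, ← Real.rpow_natCast, ← Real.rpow_neg hq.le]
  push_cast
  ring_nf

theorem X_matrix_eigenvectors_general (q : ℝ) (hq : 1 < q) (N D : ℕ)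
    (hND : 2 * D ≤ N)
    (i : ℕ) (hi1 : 1 ≤ i) (hi2 : i ≤ D - 1)
    (τ : ℝ) (hτ : τ = -q ^ ((-(N : ℝ) - 1) / 2))
    (X : Matrix (Fin 2) (Fin 2) ℝ)
    (hX : X = (τ / (q ^ D - 1)) •
      !![q ^ (N + 1) - q ^ i + q ^ D - q ^ (N + 1 - i),
         (q ^ i - 1) * (q ^ (D - i) - 1) * (q ^ (N - i + 1) - 1)
           * (q ^ (i - 1) - q ^ (N - D)) / (q - 1);
         q ^ (D + 1) * (1 - q),
         q ^ (N + D + 1 - i) + q ^ (D + i) - q ^ (N + 1) - q ^ D])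
    (yp ym : Fin 2 → ℝ)
    (hyp : yp = ![(q ^ (D - i) - 1) * (q ^ (N - i + 1) - 1)
        / ((q ^ D - 1) * (q ^ (N - 2 * i + 1) - 1)),
      q ^ (D + 1 - i) * (q - 1) / ((q ^ D - 1) * (q ^ (N - 2 * i + 1) - 1))])
    (hym : ym = ![q ^ (D - i) * (q ^ i - 1) * (q ^ (N - D - i + 1) - 1)
        / ((q ^ D - 1) * (q ^ (N - 2 * i + 1) - 1)),
      -(q ^ (D - i + 1) * (q - 1) / ((q ^ D - 1) * (q ^ (N - 2 * i + 1) - 1)))]) :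
    X.mulVec yp = (τ * q ^ i) • yp ∧
    X.mulVec ym = (τ⁻¹ * q ^ (-(i : ℤ))) • ym ∧
    yp + ym = ![1, 0] := by
  have hq0 : q ≠ 0 := by positivity
  have hq1 : q - 1 ≠ 0 := sub_ne_zero.mpr hq.ne'
  have ha : q ^ i ≠ 0 := pow_ne_zero i hq0
  have hb : q ^ D ≠ 0 := pow_ne_zero D hq0
  have hb1 : q ^ D - 1 ≠ 0 := sub_ne_zero.mpr (one_lt_pow₀ hq (by omega)).ne'
  have hca : q ^ (N + 1) - (q ^ i) ^ 2 ≠ 0 := by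
    rw [← pow_mul]; exact sub_ne_zero.mpr (pow_lt_pow_right₀ hq (by omega)).ne'
  have hτinv : τ⁻¹ = τ * q ^ (N + 1) := by
    refine inv_eq_of_mul_eq_one_right ?_
    rw [← mul_assoc, ← sq, hτ, neg_sq, Real.sq_rpow_neg_succ_div_two (by positivity),
      inv_mul_cancel₀ (pow_ne_zero _ hq0)]
  have hX' : X = (τ / (q ^ D - 1)) • Grassmann.xMat q (q ^ i) (q ^ D) (q ^ (N + 1)) := by
    rw [hX, Grassmann.xMat_pow hq0 hi1 (by omega) (by omega)]
  have hyp' := hyp.trans (Grassmann.vPlus_pow hq0 (by omega) (by omega))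
  have hym' := hym.trans (Grassmann.vMinus_pow hq0 (by omega) (by omega))
  refine ⟨?_, ?_, ?_⟩
  · rw [hX', hyp', smul_mulVec_smul_of_mulVec_eq 
      (Grassmann.xMat_mulVec_vPlus hq0 hq1 ha hb)]
    congr 1
    field_simp
  · rw [hX', hym', smul_mulVec_smul_of_mulVec_eq 
      (Grassmann.xMat_mulVec_vMinus hq0 hq1 ha hb),
      hτinv, _root_.zpow_neg, zpow_natCast]
    congr 1
    field_simp
  · rw [hyp', hym', ← smul_add, Grassmann.vPlus_add_vMinus, smul_smul,
      inv_mul_cancel₀ (mul_ne_zero hb1 hca), one_smul]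

/-- The explicit vectors `y_i`, `y_{-i}` are eigenvectors of `X(i)` for the eigenvalues
`τq^i` and `τ⁻¹q^{-i}`, and they sum to `(1,0)`. -/
theorem X_matrix_eigenvectors (q : ℝ) (hq : 1 < q) (N D : ℕ)
    (hD : 3 ≤ D) (hND : 2 * D ≤ N)
    (i : ℕ) (hi1 : 1 ≤ i) (hi2 : i ≤ D - 1)
    (τ : ℝ) (hτ : τ = -q ^ ((-(N : ℝ) - 1) / 2))
    (X : Matrix (Fin 2) (Fin 2) ℝ)
    (hX : X = (τ / (q ^ D - 1)) •
      !![q ^ (N + 1) - q ^ i + q ^ D - q ^ (N + 1 - i),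
         (q ^ i - 1) * (q ^ (D - i) - 1) * (q ^ (N - i + 1) - 1)
           * (q ^ (i - 1) - q ^ (N - D)) / (q - 1);
         q ^ (D + 1) * (1 - q),
         q ^ (N + D + 1 - i) + q ^ (D + i) - q ^ (N + 1) - q ^ D])
    (yp ym : Fin 2 → ℝ)
    (hyp : yp = ![(q ^ (D - i) - 1) * (q ^ (N - i + 1) - 1)
        / ((q ^ D - 1) * (q ^ (N - 2 * i + 1) - 1)),
      q ^ (D + 1 - i) * (q - 1) / ((q ^ D - 1) * (q ^ (N - 2 * i + 1) - 1))])
    (hym : ym = ![q ^ (D - i) * (q ^ i - 1) * (q ^ (N - D - i + 1) - 1)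
        / ((q ^ D - 1) * (q ^ (N - 2 * i + 1) - 1)),
      -(q ^ (D - i + 1) * (q - 1) / ((q ^ D - 1) * (q ^ (N - 2 * i + 1) - 1)))]) :
    X.mulVec yp = (τ * q ^ i) • yp ∧
    X.mulVec ym = (τ⁻¹ * q ^ (-(i : ℤ))) • ym ∧
    yp + ym = ![1, 0] :=
  X_matrix_eigenvectors_general q hq N D hND i hi1 hi2 τ hτ X hX yp ym hyp hym
end
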